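/- arXiv:2601.09581 — 4 statements merged into one kernel-verified Lean document; each statement's English description precedes it below -/
import Mathlib

section
/- Let W be a binary-input channel with finite output alphabet 𝒴, and define W⁻ : {0,1} → 𝒴 × 𝒴 by W⁻((y₁,y₂)|s) = (1/2)·∑_{u₁,u₂∈{0,1}, u₁⊕u₂=s} W(y₁|u₁)·W(y₂|u₂). Then the Bhattacharyya parameters satisfy Z(W⁻) ≤ 1 − (1 − Z(W))², equivalently Z(W⁻) ≤ 2·Z(W) − Z(W)². -/
/-!
Write `a, b, c, d` as `p², q², r², s²` with `p, q, r, s ≥ 0`, and put `x = pr + qs`, `y = ps + qr`,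
`m = 2pqrs`. Then `ac + bd = x² - m`, `ad + bc = y² - m`, and
`(xy - m)² - (x² - m)(y² - m) = m (x - y)² ≥ 0`, so `√((ac + bd)(ad + bc)) ≤ xy - m`, which is
`√(ab)(c + d) + √(cd)(a + b) - 2√(ab)√(cd)`. Applied to `a, b = W(y₁|0), W(y₁|1)` and
`c, d = V(y₂|0), V(y₂|1)` and summed over `(y₁, y₂)`, the terms `c + d` and `a + b` sum to `2`,
giving `Z(W⁻) ≤ Z(W) + Z(V) - Z(W) Z(V)`; for `V = W` this is `1 - (1 - Z(W))²`.
-/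

open Finset Real

lemma sqrt_mul_sq_sub_le {x y m : ℝ} (hm : 0 ≤ m) (hxy : m ≤ x * y) :
    √((x ^ 2 - m) * (y ^ 2 - m)) ≤ x * y - m := by
  refine Real.sqrt_le_iff.mpr ⟨sub_nonneg.mpr hxy, ?_⟩
  nlinarith [mul_nonneg hm (sq_nonneg (x - y))]

lemma sqrt_mul_add_mul_le {a b c d : ℝ} (ha : 0 ≤ a) (hb : 0 ≤ b) (hc : 0 ≤ c) (hd : 0 ≤ d) :
    √((a * c + b * d) * (a * d + b * c))
      ≤ √(a * b) * (c + d) + √(c * d) * (a + b) - 2 * √(a * b) * √(c * d) := by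
  obtain ⟨p, hp, rfl⟩ : ∃ p, 0 ≤ p ∧ a = p ^ 2 := ⟨√a, sqrt_nonneg a, (sq_sqrt ha).symm⟩
  obtain ⟨q, hq, rfl⟩ : ∃ q, 0 ≤ q ∧ b = q ^ 2 := ⟨√b, sqrt_nonneg b, (sq_sqrt hb).symm⟩
  obtain ⟨r, hr, rfl⟩ : ∃ r, 0 ≤ r ∧ c = r ^ 2 := ⟨√c, sqrt_nonneg c, (sq_sqrt hc).symm⟩
  obtain ⟨s, hs, rfl⟩ : ∃ s, 0 ≤ s ∧ d = s ^ 2 := ⟨√d, sqrt_nonneg d, (sq_sqrt hd).symm⟩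
  rw [← mul_pow p q, ← mul_pow r s, sqrt_sq (mul_nonneg hp hq), sqrt_sq (mul_nonneg hr hs)]
  have hm : 0 ≤ 2 * p * q * r * s := by positivity
  have hxy : 2 * p * q * r * s ≤ (p * r + q * s) * (p * s + q * r) := by
    nlinarith [mul_nonneg (mul_nonneg hp hq) (sq_nonneg (r - s)),
      mul_nonneg (mul_nonneg hr hs) (add_nonneg (sq_nonneg p) (sq_nonneg q))]
  convert sqrt_mul_sq_sub_le hm hxy using 2 <;> ring

noncomputable section Channel

variable {𝒳 𝒴 : Type*}

def bhattacharyya [Fintype 𝒴] (W : Bool → 𝒴 → ℝ) : ℝ :=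
  ∑ y, √(W false y * W true y)

def minusChannel (W : Bool → 𝒳 → ℝ) (V : Bool → 𝒴 → ℝ) : Bool → 𝒳 × 𝒴 → ℝ :=
  fun s p => (1/2) * ∑ u₁ : Bool, ∑ u₂ : Bool,
    if xor u₁ u₂ = s then W u₁ p.1 * V u₂ p.2 else 0

lemma minusChannel_false (W : Bool → 𝒳 → ℝ) (V : Bool → 𝒴 → ℝ) (p : 𝒳 × 𝒴) :
    minusChannel W V false p = (W false p.1 * V false p.2 + W true p.1 * V true p.2) / 2 := by
  simp only [minusChannel, Fintype.sum_bool, Bool.xor_false, Bool.xor_true, Bool.not_false,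
    Bool.not_true, Bool.true_eq_false, reduceIte]
  ring

lemma minusChannel_true (W : Bool → 𝒳 → ℝ) (V : Bool → 𝒴 → ℝ) (p : 𝒳 × 𝒴) :
    minusChannel W V true p = (W false p.1 * V true p.2 + W true p.1 * V false p.2) / 2 := by
  simp only [minusChannel, Fintype.sum_bool, Bool.xor_false, Bool.xor_true, Bool.not_false,
    Bool.not_true, Bool.false_eq_true, reduceIte]
  ring

lemma sqrt_minusChannel_le {W : Bool → 𝒳 → ℝ} {V : Bool → 𝒴 → ℝ} (hW : ∀ x y, 0 ≤ W x y)
    (hV : ∀ x y, 0 ≤ V x y) (p : 𝒳 × 𝒴) :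
    √(minusChannel W V false p * minusChannel W V true p)
      ≤ √(W false p.1 * W true p.1) * ((V false p.2 + V true p.2) / 2)
        + (W false p.1 + W true p.1) / 2 * √(V false p.2 * V true p.2)
        - √(W false p.1 * W true p.1) * √(V false p.2 * V true p.2) := by
  rw [minusChannel_false, minusChannel_true, div_mul_div_comm,
    sqrt_div' _ (mul_self_nonneg 2), sqrt_mul_self zero_le_two]
  have := sqrt_mul_add_mul_le (hW false p.1) (hW true p.1) (hV false p.2) (hV true p.2)
  linarith

variable [Fintype 𝒳] [Fintype 𝒴]

theorem bhattacharyya_minusChannel_le {W : Bool → 𝒳 → ℝ} {V : Bool → 𝒴 → ℝ}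
    (hW : ∀ x y, 0 ≤ W x y) (hV : ∀ x y, 0 ≤ V x y)
    (hW_sum : ∀ x, ∑ y, W x y = 1) (hV_sum : ∀ x, ∑ y, V x y = 1) :
    bhattacharyya (minusChannel W V)
      ≤ bhattacharyya W + bhattacharyya V - bhattacharyya W * bhattacharyya V := by
  calc bhattacharyya (minusChannel W V)
      ≤ ∑ p : 𝒳 × 𝒴, (√(W false p.1 * W true p.1) * ((V false p.2 + V true p.2) / 2)
        + (W false p.1 + W true p.1) / 2 * √(V false p.2 * V true p.2)
        - √(W false p.1 * W true p.1) * √(V false p.2 * V true p.2)) :=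
      sum_le_sum fun p _ => sqrt_minusChannel_le hW hV p
    _ = bhattacharyya W + bhattacharyya V - bhattacharyya W * bhattacharyya V := by
      simp only [Fintype.sum_prod_type, sum_add_distrib, sum_sub_distrib, ← mul_sum, ← sum_mul,
        ← sum_div, hW_sum, hV_sum, bhattacharyya]
      ring

end Channel

/-- For a binary-input channel `W` with finite output alphabet, the channel
`W⁻((y₁,y₂)|s) = (1/2)·∑_{u₁⊕u₂=s} W(y₁|u₁)·W(y₂|u₂)` satisfies
`Z(W⁻) ≤ 1 − (1 − Z(W))²`, where `Z` denotes the Bhattacharyya parameter. -/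
theorem bhattacharyya_wminus_le {𝒴 : Type*} [Fintype 𝒴]
    (W : Bool → 𝒴 → ℝ)
    (hW_nonneg : ∀ x y, 0 ≤ W x y)
    (hW_sum : ∀ x, ∑ y, W x y = 1)
    (Wm : Bool → 𝒴 × 𝒴 → ℝ)
    (hWm : ∀ s p, Wm s p =
      (1/2) * ∑ u₁ : Bool, ∑ u₂ : Bool,
        if xor u₁ u₂ = s then W u₁ p.1 * W u₂ p.2 else 0) :
    ∑ p : 𝒴 × 𝒴, Real.sqrt (Wm false p * Wm true p)
      ≤ 1 - (1 - ∑ y : 𝒴, Real.sqrt (W false y * W true y)) ^ 2 := by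
  have hWm_eq : Wm = minusChannel W W := funext₂ hWm
  subst hWm_eq
  calc bhattacharyya (minusChannel W W)
      ≤ bhattacharyya W + bhattacharyya W - bhattacharyya W * bhattacharyya W :=
        bhattacharyya_minusChannel_le hW_nonneg hW_nonneg hW_sum hW_sum
    _ = 1 - (1 - bhattacharyya W) ^ 2 := by ring
end

section
/- Fix Z ∈ (0,1) and set λ = −ln(1−Z) > 0. Fix δ > 0, and let (r(m))_{m} be any sequence of integers with 2 ≤ r(m) ≤ log₂ m − log₂ λ − δ for all sufficiently large m. For integers m and r with 2 ≤ r < m, define F(m,r) = ∑_{t=2}^{r} [ 2^{m−r+t} · (1 − (1−Z)^{2^{r−t}})^{2^{m−r+t}−1} · ∏_{s=t+1}^{r} (2^{m−r+s} − 1) ] + (2^{m−r+2} − 1) · (1 − (1−Z)^{2^{r−1}})^{2^{m−r}} · ∏_{s=2}^{r} (2^{m−r+s} − 1), where empty products equal 1. Then F(m, r(m)) → 0 as m → ∞. -/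
open Finset Filter

private lemma exp_ge_pow4 (x : ℝ) (hx : 0 ≤ x) : (x / 4) ^ 4 ≤ Real.exp x := by
  have h1 : x / 4 + 1 ≤ Real.exp (x / 4) := Real.add_one_le_exp _
  calc (x / 4) ^ 4 ≤ (Real.exp (x / 4)) ^ 4 :=
        pow_le_pow_left₀ (by positivity) (by linarith) 4
    _ = Real.exp (((4:ℕ) : ℝ) * (x / 4)) := (Real.exp_nat_mul _ 4).symm
    _ = Real.exp x := by rw [show ((4:ℕ):ℝ) * (x / 4) = x by push_cast; ring]

set_option maxHeartbeats 2000000 in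
/-- Fix `Z ∈ (0,1)`, `λ = −ln(1−Z)`, `δ > 0`, and a sequence of integers
`r(m)` with `2 ≤ r(m) ≤ log₂ m − log₂ λ − δ` for all sufficiently large `m`. Then the
explicit RPA error bound
`F(m,r) = ∑_{t=2}^{r} 2^{m−r+t}·(1−(1−Z)^{2^{r−t}})^{2^{m−r+t}−1}·∏_{s=t+1}^{r}(2^{m−r+s}−1)`
`          + (2^{m−r+2}−1)·(1−(1−Z)^{2^{r−1}})^{2^{m−r}}·∏_{s=2}^{r}(2^{m−r+s}−1)`
satisfies `F(m, r(m)) → 0` as `m → ∞`. -/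
theorem rpa_error_bound_tendsto_zero (Z : ℝ) (hZ : Z ∈ Set.Ioo (0 : ℝ) 1)
    (δ : ℝ) (hδ : 0 < δ) (r : ℕ → ℕ)
    (hr : ∀ᶠ m in atTop, 2 ≤ r m ∧
      (r m : ℝ) ≤ Real.logb 2 m - Real.logb 2 (-Real.log (1 - Z)) - δ) :
    Tendsto (fun m : ℕ =>
      (∑ t ∈ Finset.Icc 2 (r m),
        (2 : ℝ) ^ (m - r m + t) *
          (1 - (1 - Z) ^ (2 ^ (r m - t))) ^ (2 ^ (m - r m + t) - 1) *
          ∏ s ∈ Finset.Icc (t + 1) (r m), ((2 : ℝ) ^ (m - r m + s) - 1))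
      + ((2 : ℝ) ^ (m - r m + 2) - 1) *
          (1 - (1 - Z) ^ (2 ^ (r m - 1))) ^ (2 ^ (m - r m)) *
          ∏ s ∈ Finset.Icc 2 (r m), ((2 : ℝ) ^ (m - r m + s) - 1))
      atTop (nhds 0) := by
  obtain ⟨hZ0, hZ1⟩ := hZ
  have h1Z0 : (0:ℝ) < 1 - Z := by linarith
  have h1Z1 : 1 - Z < 1 := by linarith
  set lam : ℝ := -Real.log (1 - Z) with hlam_def
  clear_value lam
  have hlam : 0 < lam := by
    have := Real.log_neg h1Z0 h1Z1
    simp only [hlam_def]; linarith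
  have hZexp : 1 - Z = Real.exp (-lam) := by
    rw [hlam_def, neg_neg, Real.exp_log h1Z0]
  have hlog2 : (0.6931471803 : ℝ) < Real.log 2 := Real.log_two_gt_d9
  have hlog2le : Real.log 2 ≤ 1 := by
    have := Real.log_le_sub_one_of_pos (by norm_num : (0:ℝ) < 2); linarith
  set a : ℝ := Real.log 2 - 1/2 with ha_def
  clear_value a
  have ha : 0 < a := by simp only [ha_def]; linarith
  set c : ℝ := lam * (a / 4) ^ 4 with hc_def
  clear_value c
  have hc : 0 < c := by rw [hc_def]; positivity
  set k : ℝ := lam * (Real.log 2 / 4) ^ 4 with hk_def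
  clear_value k
  have hk : 0 < k := by rw [hk_def]; positivity
  have hbase_nn : ∀ j : ℕ, 0 ≤ 1 - (1 - Z) ^ j := by
    intro j
    have : (1 - Z) ^ j ≤ 1 := pow_le_one₀ h1Z0.le h1Z1.le
    linarith
  have hfac_nn : ∀ e : ℕ, (0:ℝ) ≤ (2:ℝ) ^ e - 1 := by
    intro e
    have : (1:ℝ) ≤ 2 ^ e := one_le_pow₀ (by norm_num)
    linarith
  apply squeeze_zero' (g := fun m : ℕ => Real.exp (-(m:ℝ)))
  · filter_upwards with m
    apply add_nonneg
    · apply Finset.sum_nonneg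
      intro t _
      exact mul_nonneg (mul_nonneg (by positivity) (pow_nonneg (hbase_nn _) _))
        (Finset.prod_nonneg fun s _ => hfac_nn _)
    · exact mul_nonneg (mul_nonneg (hfac_nn _) (pow_nonneg (hbase_nn _) _))
        (Finset.prod_nonneg fun s _ => hfac_nn _)
  · filter_upwards [hr, tendsto_natCast_atTop_atTop.eventually_ge_atTop (1/k),
      tendsto_natCast_atTop_atTop.eventually_ge_atTop (8/c),
      eventually_ge_atTop 1] with m hrm' hkm hcm hm1
    obtain ⟨h2r, hrle⟩ := hrm'
    have hm0 : (0:ℝ) < m := by exact_mod_cast hm1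
    have hm1R : (1:ℝ) ≤ m := by exact_mod_cast hm1
    have hexp2 : ∀ n : ℕ, Real.exp (Real.log 2 * n) = (2:ℝ) ^ n := by
      intro n
      rw [mul_comm, Real.exp_nat_mul, Real.exp_log (by norm_num : (0:ℝ) < 2)]
    -- key bound from the hypothesis on r
    have key : lam * (2:ℝ) ^ (r m) ≤ m := by
      have h1 : Real.logb 2 lam + (r m : ℝ) ≤ Real.logb 2 m := by linarith
      calc lam * (2:ℝ) ^ (r m)
          = (2:ℝ) ^ (Real.logb 2 lam + (r m : ℝ)) := by
            rw [Real.rpow_add (by norm_num : (0:ℝ) < 2),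
              Real.rpow_logb (by norm_num) (by norm_num) hlam, Real.rpow_natCast]
        _ ≤ (2:ℝ) ^ (Real.logb 2 (m:ℝ)) :=
            (Real.rpow_le_rpow_left_iff (by norm_num : (1:ℝ) < 2)).mpr h1
        _ = m := Real.rpow_logb (by norm_num) (by norm_num) hm0
    -- m ≤ lam * 2^m, hence r m ≤ m
    have h2m : (m:ℝ) ≤ lam * 2 ^ m := by
      have h1 : ((Real.log 2 * m) / 4) ^ 4 ≤ (2:ℝ) ^ m := by
        rw [← hexp2 m]; exact exp_ge_pow4 _ (by positivity)
      have hkm1 : 1 ≤ k * m := by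
        rw [div_le_iff₀ hk] at hkm; linarith
      have h2 : k * (m:ℝ) ^ 4 ≤ lam * 2 ^ m := by
        have := mul_le_mul_of_nonneg_left h1 hlam.le
        calc k * (m:ℝ)^4 = lam * ((Real.log 2 * m) / 4) ^ 4 := by rw [hk_def]; ring
          _ ≤ lam * 2 ^ m := this
      have hm3 : (m:ℝ) ≤ (m:ℝ) ^ 3 := by
        have h := mul_le_mul hm1R hm1R zero_le_one hm0.le
        have h' := mul_le_mul_of_nonneg_left h hm0.le
        have hcube : (m:ℝ) * ((m:ℝ) * (m:ℝ)) = (m:ℝ) ^ 3 := by ring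
        linarith
      have h3' : (m:ℝ) ^ 3 ≤ (k * m) * (m:ℝ) ^ 3 :=
        le_mul_of_one_le_left (by positivity) hkm1
      have h3 : (m:ℝ) ≤ k * m ^ 4 := by
        have he : (k * m) * (m:ℝ) ^ 3 = k * (m:ℝ) ^ 4 := by ring
        linarith
      linarith
    have hrm : r m ≤ m := by
      have h2rm : (2:ℝ) ^ (r m) ≤ 2 ^ m :=
        le_of_mul_le_mul_left (key.trans h2m) hlam
      exact (pow_le_pow_iff_right₀ (by norm_num : (1:ℝ) < 2)).mp h2rm
    set b : ℝ := 1 - (1 - Z) ^ (2 ^ (r m - 1)) with hb_def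
    clear_value b
    set N : ℕ := 2 ^ (m - r m) with hN_def
    clear_value N
    have hb0 : 0 ≤ b := by rw [hb_def]; exact hbase_nn _
    have hb1 : b ≤ 1 := by
      have : (0:ℝ) ≤ (1 - Z) ^ (2 ^ (r m - 1)) := by positivity
      simp only [hb_def]; linarith
    have Qnn : (0:ℝ) ≤ 2 ^ m * b ^ N * 2 ^ (m * m) :=
      mul_nonneg (mul_nonneg (by positivity) (pow_nonneg hb0 _)) (by positivity)
    -- bound on the products
    have hprodle : ∀ lo : ℕ, 2 ≤ lo →
        (∏ s ∈ Finset.Icc lo (r m), ((2:ℝ) ^ (m - r m + s) - 1)) ≤ 2 ^ (m * m) := by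
      intro lo hlo
      calc (∏ s ∈ Finset.Icc lo (r m), ((2:ℝ) ^ (m - r m + s) - 1))
          ≤ ∏ _s ∈ Finset.Icc lo (r m), (2:ℝ) ^ m := by
            apply Finset.prod_le_prod
            · intro s _; exact hfac_nn _
            · intro s hs
              have hs' := Finset.mem_Icc.mp hs
              have hle : m - r m + s ≤ m := by omega
              have : (2:ℝ) ^ (m - r m + s) ≤ 2 ^ m := pow_le_pow_right₀ (by norm_num) hle
              linarith
        _ = ((2:ℝ) ^ m) ^ (Finset.Icc lo (r m)).card := Finset.prod_const _
        _ ≤ ((2:ℝ) ^ m) ^ m := by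
            apply pow_le_pow_right₀ (one_le_pow₀ (by norm_num))
            rw [Nat.card_Icc]; omega
        _ = 2 ^ (m * m) := by rw [← pow_mul]
    -- each sum term bound
    have hterm : ∀ t ∈ Finset.Icc 2 (r m),
        (2 : ℝ) ^ (m - r m + t) *
          (1 - (1 - Z) ^ (2 ^ (r m - t))) ^ (2 ^ (m - r m + t) - 1) *
          ∏ s ∈ Finset.Icc (t + 1) (r m), ((2 : ℝ) ^ (m - r m + s) - 1)
        ≤ 2 ^ m * b ^ N * 2 ^ (m * m) := by
      intro t ht
      obtain ⟨ht2, htr⟩ := Finset.mem_Icc.mp ht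
      have hA : (2:ℝ) ^ (m - r m + t) ≤ 2 ^ m :=
        pow_le_pow_right₀ (by norm_num) (by omega)
      have hbase_le : 1 - (1 - Z) ^ (2 ^ (r m - t)) ≤ b := by
        have h1 : (1 - Z) ^ (2 ^ (r m - 1)) ≤ (1 - Z) ^ (2 ^ (r m - t)) :=
          pow_le_pow_of_le_one h1Z0.le h1Z1.le
            (Nat.pow_le_pow_right (by norm_num) (by omega))
        simp only [hb_def]; linarith
      have hNE : N ≤ 2 ^ (m - r m + t) - 1 := by
        have h4 : 2 ^ (m - r m) * 4 ≤ 2 ^ (m - r m + t) := by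
          rw [pow_add]
          have h5 : (4:ℕ) ≤ 2 ^ t := by
            calc (4:ℕ) = 2 ^ 2 := rfl
              _ ≤ 2 ^ t := Nat.pow_le_pow_right (by norm_num) ht2
          exact Nat.mul_le_mul_left _ h5
        have h6 : 1 ≤ 2 ^ (m - r m) := Nat.one_le_two_pow
        simp only [hN_def]; omega
      have hB : (1 - (1 - Z) ^ (2 ^ (r m - t))) ^ (2 ^ (m - r m + t) - 1) ≤ b ^ N := by
        calc (1 - (1 - Z) ^ (2 ^ (r m - t))) ^ (2 ^ (m - r m + t) - 1)
            ≤ b ^ (2 ^ (m - r m + t) - 1) := pow_le_pow_left₀ (hbase_nn _) hbase_le _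
          _ ≤ b ^ N := pow_le_pow_of_le_one hb0 hb1 hNE
      have hC := hprodle (t+1) (by omega)
      have hCnn : (0:ℝ) ≤ ∏ s ∈ Finset.Icc (t + 1) (r m), ((2:ℝ) ^ (m - r m + s) - 1) :=
        Finset.prod_nonneg fun s _ => hfac_nn _
      exact mul_le_mul
        (mul_le_mul hA hB (pow_nonneg (hbase_nn _) _) (by positivity))
        hC hCnn (mul_nonneg (by positivity) (pow_nonneg hb0 _))
    -- sum bound
    have hsum : (∑ t ∈ Finset.Icc 2 (r m),
        (2 : ℝ) ^ (m - r m + t) *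
          (1 - (1 - Z) ^ (2 ^ (r m - t))) ^ (2 ^ (m - r m + t) - 1) *
          ∏ s ∈ Finset.Icc (t + 1) (r m), ((2 : ℝ) ^ (m - r m + s) - 1))
        ≤ (m:ℝ) * (2 ^ m * b ^ N * 2 ^ (m * m)) := by
      have h1 := Finset.sum_le_card_nsmul (Finset.Icc 2 (r m)) _ _ hterm
      rw [nsmul_eq_mul] at h1
      refine h1.trans (mul_le_mul_of_nonneg_right ?_ Qnn)
      have h2 : (Finset.Icc 2 (r m)).card ≤ m := by rw [Nat.card_Icc]; omega
      exact_mod_cast h2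
    -- last term bound
    have hlast : ((2 : ℝ) ^ (m - r m + 2) - 1) * b ^ N *
          ∏ s ∈ Finset.Icc 2 (r m), ((2 : ℝ) ^ (m - r m + s) - 1)
        ≤ 2 ^ m * b ^ N * 2 ^ (m * m) := by
      have hA : (2:ℝ) ^ (m - r m + 2) - 1 ≤ 2 ^ m := by
        have : (2:ℝ) ^ (m - r m + 2) ≤ 2 ^ m :=
          pow_le_pow_right₀ (by norm_num) (by omega)
        linarith
      have hC := hprodle 2 le_rfl
      have hCnn : (0:ℝ) ≤ ∏ s ∈ Finset.Icc 2 (r m), ((2:ℝ) ^ (m - r m + s) - 1) :=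
        Finset.prod_nonneg fun s _ => hfac_nn _
      exact mul_le_mul
        (mul_le_mul hA le_rfl (pow_nonneg hb0 _) (by positivity))
        hC hCnn (mul_nonneg (by positivity) (pow_nonneg hb0 _))
    -- b^N ≤ exp(-(lam/m) * exp(a m))
    have hbu : (1 - Z) ^ (2 ^ (r m - 1)) = Real.exp (-(lam * (2:ℝ) ^ (r m - 1))) := by
      rw [hZexp, ← Real.exp_nat_mul]
      congr 1; push_cast; ring
    have hpowr : (2:ℝ) ^ (r m - 1) * 2 = 2 ^ (r m) := by
      rw [← pow_succ]; congr 1; omega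
    have hx : lam * (2:ℝ) ^ (r m - 1) ≤ m / 2 := by
      have h7 : lam * ((2:ℝ) ^ (r m - 1) * 2) ≤ m := by rw [hpowr]; exact key
      linarith
    set u : ℝ := Real.exp (-(lam * (2:ℝ) ^ (r m - 1))) with hu_def
    clear_value u
    have hbN : b ^ N ≤ Real.exp (-((N:ℝ) * u)) := by
      have h1 : b ≤ Real.exp (-u) := by
        have h2 := Real.add_one_le_exp (-u)
        simp only [hb_def, hbu]; linarith
      calc b ^ N ≤ (Real.exp (-u)) ^ N := pow_le_pow_left₀ hb0 h1 N
        _ = Real.exp (-((N:ℝ) * u)) := by rw [← Real.exp_nat_mul]; ring_nf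
    have hu_ge : Real.exp (-((m:ℝ) / 2)) ≤ u := by
      rw [hu_def]; exact Real.exp_le_exp.mpr (by linarith)
    have hNcast : (N:ℝ) = (2:ℝ) ^ (m - r m) := by simp [hN_def]
    have hNr : (2:ℝ) ^ (m - r m) * 2 ^ (r m) = 2 ^ m := by
      rw [← pow_add]; congr 1; omega
    have hN_ge : lam / m * 2 ^ m ≤ (N:ℝ) := by
      rw [hNcast, div_mul_eq_mul_div, div_le_iff₀ hm0]
      have hA := mul_le_mul_of_nonneg_right key
        (pow_pos (by norm_num : (0:ℝ) < 2) (m - r m)).le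
      have hB : lam * (2:ℝ) ^ (r m) * 2 ^ (m - r m) = lam * 2 ^ m := by
        rw [mul_assoc, mul_comm ((2:ℝ) ^ (r m)), hNr]
      linarith
    have hae : Real.exp (a * m) = 2 ^ m * Real.exp (-((m:ℝ) / 2)) := by
      rw [← hexp2 m, ← Real.exp_add]
      congr 1; simp only [ha_def]; ring
    have hNu : lam / m * Real.exp (a * m) ≤ (N:ℝ) * u := by
      have := mul_le_mul hN_ge hu_ge (Real.exp_pos _).le
        (by positivity : (0:ℝ) ≤ (N:ℝ))
      calc lam / m * Real.exp (a * m)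
          = lam / m * 2 ^ m * Real.exp (-((m:ℝ)/2)) := by rw [hae]; ring
        _ ≤ (N:ℝ) * u := this
    have e4 : b ^ N ≤ Real.exp (-(lam / m * Real.exp (a * m))) :=
      hbN.trans (Real.exp_le_exp.mpr (by linarith))
    -- final combination
    have e1 : ((m:ℝ) + 1) ≤ Real.exp m := Real.add_one_le_exp m
    have e2 : (2:ℝ) ^ m ≤ Real.exp m := by
      rw [← hexp2 m]
      apply Real.exp_le_exp.mpr
      have := mul_le_mul_of_nonneg_right hlog2le hm0.le
      linarith
    have e3 : (2:ℝ) ^ (m * m) ≤ Real.exp ((m:ℝ) * m) := by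
      rw [← hexp2 (m * m)]
      apply Real.exp_le_exp.mpr
      push_cast
      have := mul_le_mul_of_nonneg_right hlog2le (mul_nonneg hm0.le hm0.le)
      linarith
    have e5 : c * (m:ℝ) ^ 3 ≤ lam / m * Real.exp (a * m) := by
      have h1 : ((a * m) / 4) ^ 4 ≤ Real.exp (a * m) :=
        exp_ge_pow4 _ (mul_nonneg ha.le (Nat.cast_nonneg m))
      have h2 : lam / m * ((a * m) / 4) ^ 4 = c * m ^ 3 := by
        rw [hc_def]; field_simp
      calc c * (m:ℝ)^3 = lam / m * ((a * m) / 4) ^ 4 := h2.symm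
        _ ≤ lam / m * Real.exp (a * m) :=
          mul_le_mul_of_nonneg_left h1 (div_pos hlam hm0).le
    have hcm' : (8:ℝ) ≤ c * m := by rw [div_le_iff₀ hc] at hcm; linarith
    have hwm : (m:ℝ) + ((m:ℝ) + -(lam / m * Real.exp (a * m)) + (m:ℝ) * m) ≤ -(m:ℝ) := by
      have hmm : (m:ℝ) ≤ (m:ℝ) * m := le_mul_of_one_le_left hm0.le hm1R
      have h8 : 8 * ((m:ℝ) * m) ≤ c * (m:ℝ) ^ 3 := by
        have h := mul_le_mul_of_nonneg_right hcm' (mul_nonneg hm0.le hm0.le)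
        have he : c * (m:ℝ) * ((m:ℝ) * m) = c * (m:ℝ) ^ 3 := by ring
        linarith
      linarith [e5]
    calc (∑ t ∈ Finset.Icc 2 (r m),
        (2 : ℝ) ^ (m - r m + t) *
          (1 - (1 - Z) ^ (2 ^ (r m - t))) ^ (2 ^ (m - r m + t) - 1) *
          ∏ s ∈ Finset.Icc (t + 1) (r m), ((2 : ℝ) ^ (m - r m + s) - 1))
      + ((2 : ℝ) ^ (m - r m + 2) - 1) * b ^ N *
          ∏ s ∈ Finset.Icc 2 (r m), ((2 : ℝ) ^ (m - r m + s) - 1)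
        ≤ (m:ℝ) * (2 ^ m * b ^ N * 2 ^ (m * m)) + 2 ^ m * b ^ N * 2 ^ (m * m) :=
          add_le_add hsum hlast
      _ = ((m:ℝ) + 1) * (2 ^ m * b ^ N * 2 ^ (m * m)) := by ring
      _ ≤ Real.exp m * (Real.exp m * Real.exp (-(lam / m * Real.exp (a * m))) * Real.exp ((m:ℝ) * m)) := by
          apply mul_le_mul e1 _ Qnn (Real.exp_pos _).le
          exact mul_le_mul
            (mul_le_mul e2 e4 (pow_nonneg hb0 _) (Real.exp_pos _).le)
            e3 (by positivity) (by positivity)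
      _ = Real.exp ((m:ℝ) + ((m:ℝ) + -(lam / m * Real.exp (a * m)) + (m:ℝ) * m)) := by
          rw [← Real.exp_add, ← Real.exp_add, ← Real.exp_add]
      _ ≤ Real.exp (-(m:ℝ)) := Real.exp_le_exp.mpr hwm
  · have h1 : Tendsto (fun m : ℕ => -(m:ℝ)) atTop atBot :=
      tendsto_neg_atBot_iff.mpr tendsto_natCast_atTop_atTop
    exact Real.tendsto_exp_atBot.comp h1
end

section
/- Fix Z ∈ (0,1) and set λ = −ln(1−Z) > 0. Fix δ > 0, and let (r(m))_m be any sequence of integers with 2 ≤ r(m) ≤ log₂ m − log₂ λ − δ for all sufficiently large m. Then (2^{m−r(m)+2} − 1) · (1 − (1−Z)^{2^{r(m)−1}})^{2^{m−r(m)}} · ∏_{s=2}^{r(m)} (2^{m−r(m)+s} − 1) → 0 as m → ∞. -/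
open Finset Filter


set_option maxHeartbeats 1000000
theorem key_bound (Z lam δ : ℝ) (hZ : Z ∈ Set.Ioo (0:ℝ) 1) (hδ : 0 < δ)
    (hlam : lam = -Real.log (1 - Z)) (m r : ℕ) (h2 : 2 ≤ r) (hrm : r ≤ m) (h3 : 3 ≤ m)
    (hrle : (r:ℝ) ≤ Real.logb 2 m - Real.logb 2 lam - δ) :
    ((2 : ℝ) ^ (m - r + 2) - 1) *
        (1 - (1 - Z) ^ (2 ^ (r - 1))) ^ (2 ^ (m - r)) *
        ∏ s ∈ Finset.Icc 2 r, ((2 : ℝ) ^ (m - r + s) - 1)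
      ≤ Real.exp (3*(m:ℝ)^2 * Real.log 2 -
          lam * Real.exp ((Real.log 2 - Real.exp (-(δ * Real.log 2))/2) * m) / m) := by
  obtain ⟨hZ0, hZ1⟩ := hZ
  have hZ1' : 0 < 1 - Z := by linarith
  have hZ1'' : 1 - Z < 1 := by linarith
  have hlampos : 0 < lam := by
    rw [hlam]; simpa using Real.log_neg hZ1' hZ1''
  set L := Real.log 2 with hL
  have hLpos : 0 < L := Real.log_pos one_lt_two
  have hm0 : (0:ℝ) < m := by
    have : (0:ℕ) < m := by omega
    exact_mod_cast this
  -- p := (1-Z)^(2^(r-1))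
  set p : ℝ := (1 - Z) ^ (2 ^ (r - 1)) with hp
  have hp_eq : p = Real.exp (-((2:ℝ) ^ (r - 1) * lam)) := by
    rw [hp, ← Real.exp_log hZ1', ← Real.exp_nat_mul]
    congr 1
    rw [hlam]
    push_cast
    ring
  have hp0 : 0 ≤ p := by positivity
  have hp1 : p ≤ 1 := pow_le_one₀ (le_of_lt hZ1') (by linarith)
  -- the factor bound from hrle : 2^r ≤ m * exp(-δL) / lam
  have h2r : (2:ℝ) ^ r ≤ (m:ℝ) * Real.exp (-(δ * L)) / lam := by
    have h2exp : (2:ℝ) = Real.exp L := (Real.exp_log two_pos).symm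
    have hrL : (r:ℝ) * L ≤ Real.log m - Real.log lam - δ * L := by
      have hlogb : Real.logb 2 (m:ℝ) = Real.log m / L := rfl
      have hlogb2 : Real.logb 2 lam = Real.log lam / L := rfl
      have := mul_le_mul_of_nonneg_right hrle (le_of_lt hLpos)
      rw [hlogb, hlogb2] at this
      calc (r:ℝ) * L ≤ (Real.log ↑m / L - Real.log lam / L - δ) * L := this
        _ = Real.log m - Real.log lam - δ * L := by field_simp
    calc (2:ℝ) ^ r = Real.exp ((r:ℝ) * L) := by
            rw [h2exp, ← Real.exp_nat_mul]
      _ ≤ Real.exp (Real.log m - Real.log lam - δ * L) := Real.exp_le_exp.mpr hrL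
      _ = (m:ℝ) * Real.exp (-(δ * L)) / lam := by
            rw [Real.exp_sub, Real.exp_sub, Real.exp_log hm0, Real.exp_log hlampos,
              Real.exp_neg]
            field_simp
  -- hence lam * 2^(r-1) ≤ m * exp(-δL) / 2
  have h2r1 : (2:ℝ) ^ r = 2 * 2 ^ (r - 1) := by
    rw [← pow_succ']
    congr 1
    omega
  have hlam2r : lam * (2:ℝ) ^ (r - 1) ≤ (m:ℝ) * Real.exp (-(δ * L)) / 2 := by
    have := mul_le_mul_of_nonneg_left h2r (le_of_lt hlampos)
    rw [h2r1] at this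
    have hx : lam * ((m:ℝ) * Real.exp (-(δ * L)) / lam) = (m:ℝ) * Real.exp (-(δ * L)) := by
      field_simp
    nlinarith
  -- p ≥ exp(-(m * exp(-δL)/2))
  have hp_lb : Real.exp (-((m:ℝ) * Real.exp (-(δ * L)) / 2)) ≤ p := by
    rw [hp_eq]
    apply Real.exp_le_exp.mpr
    nlinarith
  -- N := 2^(m-r) ≥ lam * 2^m / (m * exp(-δL))
  have hNsplit : (2:ℝ) ^ (m - r) * 2 ^ r = 2 ^ m := by
    rw [← pow_add]
    congr 1
    omega
  have h2rpos : (0:ℝ) < 2 ^ r := by positivity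
  have hN_lb : lam * (2:ℝ) ^ m / ((m:ℝ) * Real.exp (-(δ * L))) ≤ (2:ℝ) ^ (m - r) := by
    rw [div_le_iff₀ (by positivity)]
    have h1 : (2:ℝ) ^ (m - r) * (2:ℝ) ^ r * lam ≤
        (2:ℝ) ^ (m - r) * ((m:ℝ) * Real.exp (-(δ * L)) / lam) * lam := by
      have := mul_le_mul_of_nonneg_left h2r (le_of_lt (by positivity : (0:ℝ) < 2 ^ (m - r)))
      nlinarith
    rw [hNsplit] at h1
    have h2 : (2:ℝ) ^ (m - r) * ((m:ℝ) * Real.exp (-(δ * L)) / lam) * lam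
        = (2:ℝ) ^ (m - r) * ((m:ℝ) * Real.exp (-(δ * L))) := by
      field_simp
    nlinarith
  -- N * p ≥ lam * exp(ε m)/m
  set ε : ℝ := L - Real.exp (-(δ * L)) / 2 with hε
  have hNp : lam * Real.exp (ε * m) / m ≤ (2:ℝ) ^ (m - r) * p := by
    have hA : 0 < lam * (2:ℝ) ^ m / ((m:ℝ) * Real.exp (-(δ * L))) := by positivity
    have hstep := mul_le_mul hN_lb hp_lb (le_of_lt (Real.exp_pos _)) (by positivity)
    refine le_trans ?_ hstep
    have h2m : (2:ℝ) ^ m = Real.exp ((m:ℝ) * L) := by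
      rw [(Real.exp_log two_pos).symm, ← Real.exp_nat_mul]
    rw [h2m]
    have hRHS : lam * Real.exp ((m:ℝ)*L) / ((m:ℝ) * Real.exp (-(δ*L))) *
        Real.exp (-((m:ℝ) * Real.exp (-(δ*L)) / 2))
        = lam / (m:ℝ) * Real.exp ((m:ℝ)*L + δ*L - (m:ℝ) * Real.exp (-(δ*L)) / 2) := by
      have h1 : lam * Real.exp ((m:ℝ)*L) / ((m:ℝ) * Real.exp (-(δ*L)))
          = lam / (m:ℝ) * Real.exp ((m:ℝ)*L + δ*L) := by
        rw [Real.exp_add, Real.exp_neg]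
        field_simp
      rw [h1, mul_assoc, ← Real.exp_add, sub_eq_add_neg]
    rw [hRHS, mul_div_right_comm]
    have hXY : Real.exp (ε * (m:ℝ)) ≤
        Real.exp ((m:ℝ)*L + δ*L - (m:ℝ) * Real.exp (-(δ*L)) / 2) := by
      apply Real.exp_le_exp.mpr
      rw [hε]
      nlinarith [mul_pos hδ hLpos]
    exact mul_le_mul_of_nonneg_left hXY (by positivity)
  -- bound B := (1-p)^N ≤ exp(-(N*p))
  have hB : (1 - p) ^ (2 ^ (m - r)) ≤ Real.exp (-((2:ℝ) ^ (m - r) * p)) := by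
    calc (1 - p) ^ (2 ^ (m - r)) ≤ Real.exp (-p) ^ (2 ^ (m - r)) := by
          apply pow_le_pow_left₀ (by linarith)
          have := Real.add_one_le_exp (-p)
          linarith
      _ = Real.exp (((2:ℕ) ^ (m - r) : ℕ) * (-p)) := by
          rw [Real.exp_nat_mul]
      _ = Real.exp (-((2:ℝ) ^ (m - r) * p)) := by
          push_cast; ring_nf
  have hB2 : (1 - p) ^ (2 ^ (m - r)) ≤ Real.exp (-(lam * Real.exp (ε * m) / m)) := by
    refine le_trans hB (Real.exp_le_exp.mpr ?_)
    linarith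
  -- prefactor bounds
  have hone_le : (1:ℝ) ≤ 2 := one_le_two
  have hA_le : (2:ℝ) ^ (m - r + 2) - 1 ≤ 2 ^ (m + 2) := by
    have h1 : (2:ℝ) ^ (m - r + 2) - 1 ≤ (2:ℝ) ^ (m - r + 2) := by linarith
    have h2 : (2:ℝ) ^ (m - r + 2) ≤ (2:ℝ) ^ (m + 2) := pow_le_pow_right₀ hone_le (by omega)
    linarith
  have hA_nonneg : (0:ℝ) ≤ (2:ℝ) ^ (m - r + 2) - 1 := by
    have := one_le_pow₀ (n := m - r + 2) hone_le
    linarith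
  have hC_le : ∏ s ∈ Finset.Icc 2 r, ((2 : ℝ) ^ (m - r + s) - 1) ≤ (2:ℝ) ^ (2 * m * m) := by
    calc ∏ s ∈ Finset.Icc 2 r, ((2 : ℝ) ^ (m - r + s) - 1)
        ≤ ∏ s ∈ Finset.Icc 2 r, (2:ℝ) ^ (2 * m) := by
          apply Finset.prod_le_prod
          · intro s hs
            have := one_le_pow₀ (n := m - r + s) hone_le
            linarith
          · intro s hs
            have hs' := Finset.mem_Icc.mp hs
            have : m - r + s ≤ 2 * m := by omega
            have h := pow_le_pow_right₀ hone_le this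
            linarith [pow_pos (two_pos : (0:ℝ) < 2) (m - r + s)]
      _ = ((2:ℝ) ^ (2 * m)) ^ (r - 1) := by
          have hcard : r + 1 - 2 = r - 1 := by omega
          rw [Finset.prod_const, Nat.card_Icc, hcard]
      _ ≤ ((2:ℝ) ^ (2 * m)) ^ m := by
          apply pow_le_pow_right₀ (one_le_pow₀ hone_le) (by omega)
      _ = (2:ℝ) ^ (2 * m * m) := by rw [← pow_mul]
  have hC_nonneg : (0:ℝ) ≤ ∏ s ∈ Finset.Icc 2 r, ((2 : ℝ) ^ (m - r + s) - 1) := by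
    apply Finset.prod_nonneg
    intro s hs
    have := one_le_pow₀ (n := m - r + s) hone_le
    linarith
  have hAC : ((2 : ℝ) ^ (m - r + 2) - 1) * ∏ s ∈ Finset.Icc 2 r, ((2 : ℝ) ^ (m - r + s) - 1)
      ≤ Real.exp (3*(m:ℝ)^2 * L) := by
    calc ((2 : ℝ) ^ (m - r + 2) - 1) * ∏ s ∈ Finset.Icc 2 r, ((2 : ℝ) ^ (m - r + s) - 1)
        ≤ (2:ℝ) ^ (m + 2) * (2:ℝ) ^ (2 * m * m) :=
          mul_le_mul hA_le hC_le hC_nonneg (by positivity)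
      _ = (2:ℝ) ^ (m + 2 + 2 * m * m) := by rw [← pow_add]
      _ ≤ (2:ℝ) ^ (3 * m * m) := pow_le_pow_right₀ hone_le (by nlinarith)
      _ = Real.exp (3*(m:ℝ)^2 * L) := by
          rw [(Real.exp_log two_pos).symm, ← Real.exp_nat_mul]
          congr 1
          push_cast
          ring
  -- combine
  have hBnn : (0:ℝ) ≤ (1 - p) ^ (2 ^ (m - r)) := pow_nonneg (by linarith) _
  calc ((2 : ℝ) ^ (m - r + 2) - 1) * (1 - p) ^ (2 ^ (m - r)) *
          ∏ s ∈ Finset.Icc 2 r, ((2 : ℝ) ^ (m - r + s) - 1)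
      = (((2 : ℝ) ^ (m - r + 2) - 1) * ∏ s ∈ Finset.Icc 2 r, ((2 : ℝ) ^ (m - r + s) - 1)) *
          (1 - p) ^ (2 ^ (m - r)) := by ring
    _ ≤ Real.exp (3*(m:ℝ)^2 * L) * Real.exp (-(lam * Real.exp (ε * m) / m)) :=
        mul_le_mul hAC hB2 hBnn (le_of_lt (Real.exp_pos _))
    _ = Real.exp (3*(m:ℝ)^2 * L - lam * Real.exp (ε * m) / m) := by
        rw [← Real.exp_add]; ring_nf


/-- Fix `Z ∈ (0,1)`, `λ = −ln(1−Z)`, `δ > 0`, and a sequence of integers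
`r(m)` with `2 ≤ r(m) ≤ log₂ m − log₂ λ − δ` for all sufficiently large `m`. Then the
base-case term
`(2^{m−r+2}−1)·(1−(1−Z)^{2^{r−1}})^{2^{m−r}}·∏_{s=2}^{r}(2^{m−r+s}−1)` (with `r = r(m)`)
tends to `0` as `m → ∞`. -/
theorem base_case_term_tendsto_zero (Z : ℝ) (hZ : Z ∈ Set.Ioo (0 : ℝ) 1)
    (δ : ℝ) (hδ : 0 < δ) (r : ℕ → ℕ)
    (hr : ∀ᶠ m in atTop, 2 ≤ r m ∧
      (r m : ℝ) ≤ Real.logb 2 m - Real.logb 2 (-Real.log (1 - Z)) - δ) :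
    Tendsto (fun m : ℕ =>
      ((2 : ℝ) ^ (m - r m + 2) - 1) *
        (1 - (1 - Z) ^ (2 ^ (r m - 1))) ^ (2 ^ (m - r m)) *
        ∏ s ∈ Finset.Icc 2 (r m), ((2 : ℝ) ^ (m - r m + s) - 1))
      atTop (nhds 0) := by
  obtain ⟨hZ0, hZ1⟩ := hZ
  have hZ1' : 0 < 1 - Z := by linarith
  have hZ1'' : 1 - Z < 1 := by linarith
  set lam : ℝ := -Real.log (1 - Z) with hlam
  have hlampos : 0 < lam := by
    rw [hlam]; simpa using Real.log_neg hZ1' hZ1''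
  set L := Real.log 2 with hL
  have hLpos : 0 < L := Real.log_pos one_lt_two
  have hL2 : (1:ℝ)/2 < L := by
    rw [hL]; linarith [Real.log_two_gt_d9]
  set ε : ℝ := L - Real.exp (-(δ * L)) / 2 with hε
  have hεpos : 0 < ε := by
    have h1 : Real.exp (-(δ * L)) < 1 := Real.exp_lt_one_iff.mpr (by nlinarith)
    rw [hε]; linarith
  -- the dominating sequence tends to 0
  have hf : Tendsto (fun x : ℝ => 3 * x ^ 2 * L - lam * Real.exp (ε * x) / x)
      atTop atBot := by
    have h1 : Tendsto (fun x : ℝ => Real.exp (ε * x) / (ε * x) ^ 3) atTop atTop :=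
      (Real.tendsto_exp_div_pow_atTop 3).comp (tendsto_id.const_mul_atTop hεpos)
    have h1' : Tendsto (fun x : ℝ => Real.exp (ε * x) / x ^ 3) atTop atTop := by
      have h2 : Tendsto (fun x : ℝ => ε ^ 3 * (Real.exp (ε * x) / (ε * x) ^ 3))
          atTop atTop := h1.const_mul_atTop (by positivity)
      refine h2.congr' ?_
      filter_upwards [eventually_gt_atTop (0:ℝ)] with x hx
      field_simp
    have h2 : Tendsto (fun x : ℝ => lam * (Real.exp (ε * x) / x ^ 3) - 3 * L)
        atTop atTop := by
      have := (h1'.const_mul_atTop hlampos)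
      simpa [sub_eq_add_neg] using tendsto_atTop_add_const_right atTop (-(3 * L)) this
    have h3 : Tendsto (fun x : ℝ =>
        x ^ 2 * (lam * (Real.exp (ε * x) / x ^ 3) - 3 * L)) atTop atTop :=
      Tendsto.atTop_mul_atTop₀ (tendsto_pow_atTop two_ne_zero) h2
    have h4 := tendsto_neg_atBot_iff.mpr h3
    refine h4.congr' ?_
    filter_upwards [eventually_gt_atTop (0:ℝ)] with x hx
    field_simp
    ring
  have hg : Tendsto (fun m : ℕ =>
      Real.exp (3 * (m:ℝ) ^ 2 * L - lam * Real.exp (ε * m) / m)) atTop (nhds 0) :=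
    Real.tendsto_exp_atBot.comp (hf.comp tendsto_natCast_atTop_atTop)
  -- eventual bound r m ≤ m
  have hlog : ∀ᶠ x : ℝ in atTop, Real.logb 2 x ≤ x / 2 := by
    have h0 := Real.isLittleO_log_id_atTop.def (by positivity : (0:ℝ) < L / 2)
    filter_upwards [h0, eventually_ge_atTop (1:ℝ)] with x h1 hx1
    have hx0 : (0:ℝ) ≤ x := by linarith
    rw [Real.norm_eq_abs, Real.norm_eq_abs, id, abs_of_nonneg hx0] at h1
    have h2 : Real.log x ≤ L / 2 * x := le_trans (le_abs_self _) h1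
    rw [Real.logb, div_le_iff₀ hLpos]
    nlinarith
  have hlogn : ∀ᶠ m : ℕ in atTop, Real.logb 2 (m:ℝ) ≤ (m:ℝ) / 2 :=
    tendsto_natCast_atTop_atTop.eventually hlog
  have hconst : ∀ᶠ m : ℕ in atTop, -Real.logb 2 lam - δ ≤ (m:ℝ) / 2 := by
    have : Tendsto (fun m : ℕ => (m:ℝ) / 2) atTop atTop :=
      tendsto_natCast_atTop_atTop.atTop_div_const two_pos
    exact this.eventually_ge_atTop _
  have hrm : ∀ᶠ m : ℕ in atTop, r m ≤ m := by
    filter_upwards [hr, hlogn, hconst] with m ⟨_, hbd⟩ h1 h2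
    have : (r m : ℝ) ≤ (m:ℝ) := by linarith
    exact_mod_cast this
  -- squeeze
  apply tendsto_of_tendsto_of_tendsto_of_le_of_le' tendsto_const_nhds hg
  · filter_upwards with m
    have hone_le : (1:ℝ) ≤ 2 := one_le_two
    have hA : (0:ℝ) ≤ (2:ℝ) ^ (m - r m + 2) - 1 := by
      have := one_le_pow₀ (n := m - r m + 2) hone_le
      linarith
    have hB : (0:ℝ) ≤ (1 - (1 - Z) ^ (2 ^ (r m - 1))) ^ (2 ^ (m - r m)) := by
      apply pow_nonneg
      have : (1 - Z) ^ (2 ^ (r m - 1)) ≤ 1 := pow_le_one₀ (le_of_lt hZ1') (by linarith)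
      linarith
    have hC : (0:ℝ) ≤ ∏ s ∈ Finset.Icc 2 (r m), ((2 : ℝ) ^ (m - r m + s) - 1) := by
      apply Finset.prod_nonneg
      intro s _
      have := one_le_pow₀ (n := m - r m + s) hone_le
      linarith
    positivity
  · filter_upwards [hr, hrm, eventually_ge_atTop 3] with m ⟨h2m, hbd⟩ hrm' h3m
    exact key_bound Z lam δ ⟨hZ0, hZ1⟩ hδ hlam m (r m) h2m hrm' h3m hbd
end

section
/- Fix Z ∈ (0,1) and set λ = −ln(1−Z) > 0. Fix δ > 0, and let (r(m))_m be any sequence of integers with 2 ≤ r(m) ≤ log₂ m − log₂ λ − δ for all sufficiently large m. Then ∑_{t=2}^{r(m)} [ 2^{m−r(m)+t} · (1 − (1−Z)^{2^{r(m)−t}})^{2^{m−r(m)+t}−1} · ∏_{s=t+1}^{r(m)} (2^{m−r(m)+s} − 1) ] → 0 as m → ∞, where empty products equal 1. -/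
/-!
Write `1 - Z = exp (-λ)` and `R = r m`. The hypothesis on `r` gives `λ * 2 ^ R ≤ m`. At every
level `t ≥ 2` the base satisfies `(1 - Z) ^ 2 ^ (R - t) ≥ exp (-(λ * 2 ^ R / 4)) ≥ exp (-(m / 4))`,
and the exponent satisfies `2 ^ (m - R + t) - 1 ≥ 2 ^ (m - R) ≥ λ * 2 ^ m / m`. By
`1 - w ≤ exp (-w)` the middle factor is therefore at most `exp (-(λ / m * (2 * exp (-1/4)) ^ m))`.
Since `2 * exp (-1/4) > 1`, this is double-exponentially small. It overwhelms the number of terms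
and the remaining factors, which together contribute at most `m * 2 ^ (m * (m + 1))`.
-/

open Finset Filter Real

/-- The `t`-th summand, with `W = 1 - Z` and `R = r m`. -/
def aggregationTerm (W : ℝ) (m R t : ℕ) : ℝ :=
  (2 : ℝ) ^ (m - R + t) * (1 - W ^ (2 ^ (R - t))) ^ (2 ^ (m - R + t) - 1) *
    ∏ s ∈ Icc (t + 1) R, ((2 : ℝ) ^ (m - R + s) - 1)

theorem two_pow_sub_one_nonneg (k : ℕ) : 0 ≤ (2 : ℝ) ^ k - 1 :=
  sub_nonneg.2 (one_le_pow₀ one_le_two)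

theorem aggregationTerm_nonneg {W : ℝ} (hW0 : 0 ≤ W) (hW1 : W ≤ 1) (m R t : ℕ) :
    0 ≤ aggregationTerm W m R t := by
  have hmid : 0 ≤ 1 - W ^ (2 ^ (R - t)) := sub_nonneg.2 (pow_le_one₀ hW0 hW1)
  unfold aggregationTerm
  have := prod_nonneg fun s (_ : s ∈ Icc (t + 1) R) => two_pow_sub_one_nonneg (m - R + s)
  positivity

theorem prod_Icc_two_pow_sub_one_le {m R : ℕ} (t : ℕ) (hRm : R ≤ m) :
    ∏ s ∈ Icc (t + 1) R, ((2 : ℝ) ^ (m - R + s) - 1) ≤ (2 ^ m) ^ m :=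
  calc ∏ s ∈ Icc (t + 1) R, ((2 : ℝ) ^ (m - R + s) - 1)
      ≤ ∏ _s ∈ Icc (t + 1) R, (2 : ℝ) ^ m := by
        refine prod_le_prod (fun s _ => two_pow_sub_one_nonneg _) fun s hs => ?_
        have hsm : m - R + s ≤ m := by have := (mem_Icc.1 hs).2; omega
        linarith [pow_le_pow_right₀ (one_le_two (α := ℝ)) hsm]
    _ = (2 ^ m) ^ #(Icc (t + 1) R) := prod_const _
    _ ≤ (2 ^ m) ^ m :=
        pow_le_pow_right₀ (one_le_pow₀ one_le_two) (by rw [Nat.card_Icc]; omega)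

theorem one_sub_pow_le_exp_neg_mul {w : ℝ} (hw : w ≤ 1) (K : ℕ) :
    (1 - w) ^ K ≤ exp (-(K * w)) :=
  calc (1 - w) ^ K ≤ exp (-w) ^ K := pow_le_pow_left₀ (sub_nonneg.2 hw) (one_sub_le_exp_neg w) K
    _ = exp (-(K * w)) := by rw [← exp_nat_mul]; ring_nf

theorem one_sub_exp_neg_pow_pow_le {lam : ℝ} (hlam : 0 ≤ lam) {m R t : ℕ} (ht : 2 ≤ t)
    (htR : t ≤ R) :
    (1 - exp (-lam) ^ (2 ^ (R - t))) ^ (2 ^ (m - R + t) - 1) ≤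
      exp (-(2 ^ (m - R) * exp (-(lam * 2 ^ R / 4)))) := by
  have h4 : 4 ≤ 2 ^ t := by simpa using Nat.pow_le_pow_right two_pos ht
  have hsplit : 2 ^ (R - t) * 2 ^ t = 2 ^ R := by rw [← pow_add, Nat.sub_add_cancel htR]
  have hK : (2 : ℝ) ^ (m - R) ≤ ((2 ^ (m - R + t) - 1 : ℕ) : ℝ) := by
    have : 2 ^ (m - R) * 4 ≤ 2 ^ (m - R + t) := by rw [pow_add]; exact Nat.mul_le_mul_left _ h4
    exact_mod_cast (by omega : 2 ^ (m - R) ≤ 2 ^ (m - R + t) - 1)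
  have hw : exp (-(lam * 2 ^ R / 4)) ≤ exp (-lam) ^ (2 ^ (R - t)) := by
    have : ((2 ^ (R - t) : ℕ) : ℝ) * 4 ≤ 2 ^ R := by
      exact_mod_cast hsplit ▸ Nat.mul_le_mul_left _ h4
    rw [← exp_nat_mul, exp_le_exp]
    nlinarith
  calc (1 - exp (-lam) ^ (2 ^ (R - t))) ^ (2 ^ (m - R + t) - 1)
      ≤ exp (-(((2 ^ (m - R + t) - 1 : ℕ) : ℝ) * exp (-lam) ^ (2 ^ (R - t)))) :=
        one_sub_pow_le_exp_neg_mul (pow_le_one₀ (exp_nonneg _) (exp_le_one_iff.2 (by linarith))) _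
    _ ≤ exp (-(2 ^ (m - R) * exp (-(lam * 2 ^ R / 4)))) :=
        exp_le_exp.2 (neg_le_neg (mul_le_mul hK hw (exp_nonneg _) (by positivity)))

theorem aggregationTerm_le {lam : ℝ} (hlam : 0 ≤ lam) {m R t : ℕ} (ht : 2 ≤ t) (htR : t ≤ R)
    (hRm : R ≤ m) :
    aggregationTerm (exp (-lam)) m R t ≤
      2 ^ (m * (m + 1)) * exp (-(2 ^ (m - R) * exp (-(lam * 2 ^ R / 4)))) := by
  have hmid : 0 ≤ 1 - exp (-lam) ^ (2 ^ (R - t)) :=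
    sub_nonneg.2 (pow_le_one₀ (exp_nonneg _) (exp_le_one_iff.2 (by linarith)))
  have hpow : (2 : ℝ) ^ (m - R + t) ≤ 2 ^ m := pow_le_pow_right₀ one_le_two (by omega)
  calc aggregationTerm (exp (-lam)) m R t
      ≤ 2 ^ m * exp (-(2 ^ (m - R) * exp (-(lam * 2 ^ R / 4)))) * (2 ^ m) ^ m := by
        unfold aggregationTerm
        gcongr
        · exact prod_nonneg fun s _ => two_pow_sub_one_nonneg _
        · exact one_sub_exp_neg_pow_pow_le hlam ht htR
        · exact prod_Icc_two_pow_sub_one_le t hRm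
    _ = 2 ^ (m * (m + 1)) * exp (-(2 ^ (m - R) * exp (-(lam * 2 ^ R / 4)))) := by ring

theorem div_mul_pow_le_two_pow_sub_mul_exp {lam : ℝ} (hlam : 0 < lam) {m R : ℕ} (hRm : R ≤ m)
    (h : lam * 2 ^ R ≤ m) :
    lam / m * (2 * exp (-(1 / 4))) ^ m ≤ 2 ^ (m - R) * exp (-(lam * 2 ^ R / 4)) := by
  have hm : (0 : ℝ) < m := lt_of_lt_of_le (by positivity) h
  have hfirst : lam / m * 2 ^ m ≤ (2 : ℝ) ^ (m - R) := by
    rw [pow_sub₀ _ two_ne_zero hRm, ← div_eq_mul_inv, div_mul_eq_mul_div,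
      div_le_div_iff₀ hm (by positivity)]
    nlinarith [pow_pos (two_pos (α := ℝ)) m]
  calc lam / m * (2 * exp (-(1 / 4))) ^ m = lam / m * 2 ^ m * exp (-(m / 4)) := by
        rw [mul_pow, ← exp_nat_mul]; ring_nf
    _ ≤ 2 ^ (m - R) * exp (-(lam * 2 ^ R / 4)) := by
        gcongr

theorem one_lt_two_mul_exp_neg_quarter : 1 < 2 * exp (-(1 / 4)) := by
  linarith [add_one_le_exp (-(1 / 4))]

theorem sum_aggregationTerm_le {lam : ℝ} (hlam : 0 < lam) {m R : ℕ} (hRm : R ≤ m)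
    (h : lam * 2 ^ R ≤ m) :
    ∑ t ∈ Icc 2 R, aggregationTerm (exp (-lam)) m R t ≤
      m * 2 ^ (m * (m + 1)) * exp (-(lam / m * (2 * exp (-(1 / 4))) ^ m)) := by
  have hterm : ∀ t ∈ Icc 2 R, aggregationTerm (exp (-lam)) m R t ≤
      2 ^ (m * (m + 1)) * exp (-(lam / m * (2 * exp (-(1 / 4))) ^ m)) := fun t ht => by
    obtain ⟨ht2, htR⟩ := mem_Icc.1 ht
    refine (aggregationTerm_le hlam.le ht2 htR hRm).trans ?_
    have := div_mul_pow_le_two_pow_sub_mul_exp hlam hRm h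
    gcongr
  have hcard : (#(Icc 2 R) : ℝ) ≤ m := by
    exact_mod_cast (by rw [Nat.card_Icc]; omega : #(Icc 2 R) ≤ m)
  calc ∑ t ∈ Icc 2 R, aggregationTerm (exp (-lam)) m R t
      ≤ #(Icc 2 R) • (2 ^ (m * (m + 1)) * exp (-(lam / m * (2 * exp (-(1 / 4))) ^ m))) :=
        sum_le_card_nsmul _ _ _ hterm
    _ ≤ m * 2 ^ (m * (m + 1)) * exp (-(lam / m * (2 * exp (-(1 / 4))) ^ m)) := by
        rw [nsmul_eq_mul, ← mul_assoc]
        gcongr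

theorem tendsto_mul_two_pow_mul_exp_neg_div_mul_pow {a c : ℝ} (ha : 1 < a) (hc : 0 < c) :
    Tendsto (fun m : ℕ => m * 2 ^ (m * (m + 1)) * exp (-(c / m * a ^ m))) atTop (nhds 0) := by
  have hcube : ∀ᶠ m : ℕ in atTop, (m : ℝ) ^ 3 / a ^ m < c / 3 :=
    (tendsto_pow_const_div_const_pow_of_one_lt 3 ha).eventually (gt_mem_nhds (by positivity))
  have htwo_le_exp : (2 : ℝ) ≤ exp 1 := by linarith [add_one_le_exp 1]
  refine squeeze_zero' (Eventually.of_forall fun m => by positivity) ?_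
    (tendsto_self_mul_const_pow_of_lt_one (exp_nonneg (-1)) (exp_lt_one_iff.2 (by norm_num)))
  filter_upwards [hcube, eventually_gt_atTop 0] with m hm hm0
  have hm1 : (1 : ℝ) ≤ m := by exact_mod_cast hm0
  have hsq : 3 * (m : ℝ) ^ 2 ≤ c / m * a ^ m := by
    rw [div_lt_iff₀ (by positivity)] at hm
    rw [div_mul_eq_mul_div, le_div_iff₀ (by positivity)]
    nlinarith
  calc (m : ℝ) * 2 ^ (m * (m + 1)) * exp (-(c / m * a ^ m))
      ≤ m * exp 1 ^ (m * (m + 1)) * exp (-(3 * m ^ 2)) := by gcongr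
    _ = m * exp (m * (m + 1) - 3 * m ^ 2) := by
        rw [← exp_nat_mul, mul_assoc, ← exp_add]; push_cast; ring_nf
    _ ≤ m * exp (-1) ^ m := by
        rw [← exp_nat_mul]
        gcongr
        nlinarith

theorem eventually_le_and_mul_two_pow_le {lam δ : ℝ} (hlam : 0 < lam) (hδ : 0 ≤ δ) {r : ℕ → ℕ}
    (hr : ∀ᶠ m in atTop, (r m : ℝ) ≤ logb 2 m - logb 2 lam - δ) :
    ∀ᶠ m in atTop, r m ≤ m ∧ lam * 2 ^ r m ≤ m := by
  have hlin : ∀ᶠ m : ℕ in atTop, (m : ℝ) ^ 1 / 2 ^ m < lam :=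
    (tendsto_pow_const_div_const_pow_of_one_lt 1 one_lt_two).eventually (gt_mem_nhds hlam)
  filter_upwards [hr, hlin, eventually_gt_atTop 0] with m hrm hm hm0
  have hm0' : (0 : ℝ) < m := by exact_mod_cast hm0
  have hlogb : (r m : ℝ) ≤ logb 2 (m / lam) := by
    rw [logb_div hm0'.ne' hlam.ne']
    linarith
  rw [le_logb_iff_rpow_le one_lt_two (by positivity), rpow_natCast, le_div_iff₀ hlam] at hlogb
  rw [pow_one, div_lt_iff₀ (by positivity)] at hm
  refine ⟨?_, by linarith⟩
  have : (2 : ℝ) ^ r m < 2 ^ m := lt_of_mul_lt_mul_left (by linarith) hlam.le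
  exact ((pow_lt_pow_iff_right₀ one_lt_two).1 this).le

/-- Fix `Z ∈ (0,1)`, `λ = −ln(1−Z)`, `δ > 0`, and a sequence of integers
`r(m)` with `2 ≤ r(m) ≤ log₂ m − log₂ λ − δ` for all sufficiently large `m`. Then the sum
of per-level aggregation error terms
`∑_{t=2}^{r} 2^{m−r+t}·(1−(1−Z)^{2^{r−t}})^{2^{m−r+t}−1}·∏_{s=t+1}^{r}(2^{m−r+s}−1)`
(with `r = r(m)`) tends to `0` as `m → ∞`. -/
theorem aggregation_terms_tendsto_zero (Z : ℝ) (hZ : Z ∈ Set.Ioo (0 : ℝ) 1)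
    (δ : ℝ) (hδ : 0 < δ) (r : ℕ → ℕ)
    (hr : ∀ᶠ m in atTop, 2 ≤ r m ∧
      (r m : ℝ) ≤ Real.logb 2 m - Real.logb 2 (-Real.log (1 - Z)) - δ) :
    Tendsto (fun m : ℕ =>
      ∑ t ∈ Finset.Icc 2 (r m),
        (2 : ℝ) ^ (m - r m + t) *
          (1 - (1 - Z) ^ (2 ^ (r m - t))) ^ (2 ^ (m - r m + t) - 1) *
          ∏ s ∈ Finset.Icc (t + 1) (r m), ((2 : ℝ) ^ (m - r m + s) - 1))
      atTop (nhds 0) := by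
  obtain ⟨hZ0, hZ1⟩ := hZ
  set lam := -log (1 - Z)
  have hlam : 0 < lam := neg_pos.2 (log_neg (by linarith) (by linarith))
  have hW : 1 - Z = exp (-lam) := by rw [neg_neg, exp_log (by linarith)]
  rw [hW]
  have hbound : ∀ᶠ m in atTop, ∑ t ∈ Icc 2 (r m), aggregationTerm (exp (-lam)) m (r m) t ≤
      m * 2 ^ (m * (m + 1)) * exp (-(lam / m * (2 * exp (-(1 / 4))) ^ m)) := by
    filter_upwards [eventually_le_and_mul_two_pow_le hlam hδ.le (hr.mono fun _ h => h.2)]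
      with m ⟨hRm, hlamR⟩
    exact sum_aggregationTerm_le hlam hRm hlamR
  have hnonneg (m : ℕ) : 0 ≤ ∑ t ∈ Icc 2 (r m), aggregationTerm (exp (-lam)) m (r m) t :=
    sum_nonneg fun t _ => aggregationTerm_nonneg (exp_nonneg _) (exp_le_one_iff.2 (by linarith)) ..
  exact squeeze_zero' (.of_forall hnonneg) hbound
    (tendsto_mul_two_pow_mul_exp_neg_div_mul_pow one_lt_two_mul_exp_neg_quarter hlam)
end
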